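/- arXiv:1311.3066 — 2 statements merged into one kernel-verified Lean document; each statement's English description precedes it below -/
import Mathlib

section
/- Let (X, 𝒳) and (Y, 𝒴) be measurable spaces, μ, μ̃ probability measures on X, and K, K̃ : X → 𝒫(Y) stochastic kernels. Let 𝒬 = μ ⊗ K and 𝒬̃ = μ̃ ⊗ K̃ be the product measures on X × Y. Then ‖𝒬 - 𝒬̃‖ ≤ ‖μ - μ̃‖ + ‖K - K̃‖, where ‖K - K̃‖ := sup_{x ∈ X} ‖K_x - K̃_x‖. -/
/-!
For probability measures, `tvDist ν ν' = 2 (ν - ν')(univ)`, where `ν - ν'` is the truncated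
measure difference, i.e. the positive part of the Jordan decomposition of `ν - ν'`; and
`(ν - ν')(univ) ≤ c` as soon as `ν A ≤ ν' A + c` for every measurable `A`, by testing on the
complement of a Hahn set. For the products, disintegrate along `X`:
`(μ ⊗ K)(A) = ∫ K_x(A_x) dμ ≤ ∫ K'_x(A_x) dμ + sup_x (K_x - K'_x)(univ)`, and since
`x ↦ K'_x(A_x)` takes values in `[0, 1]`, `∫ K'_x(A_x) dμ ≤ (μ' ⊗ K')(A) + (μ - μ')(univ)`.
-/

open MeasureTheory ProbabilityTheory
open scoped ENNReal

/-- Total mass (as a real number) of a measure. -/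
noncomputable def mass {X : Type*} [MeasurableSpace X] (μ : Measure X) : ℝ :=
  (μ Set.univ).toReal

/-- Total variation distance `‖ν - ν'‖` between two finite measures. -/
noncomputable def tvDist {X : Type*} [MeasurableSpace X] (ν ν' : Measure X)
    [IsFiniteMeasure ν] [IsFiniteMeasure ν'] : ℝ :=
  (((ν.toSignedMeasure - ν'.toSignedMeasure).totalVariation) Set.univ).toReal

/-- The minimum `ν ∧ ν' := ν - (ν - ν')⁻` of two finite measures, via the
Hahn–Jordan decomposition of `ν - ν'`. -/
noncomputable def measInf {X : Type*} [MeasurableSpace X] (ν ν' : Measure X)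
    [IsFiniteMeasure ν] [IsFiniteMeasure ν'] : Measure X :=
  ν - (ν.toSignedMeasure - ν'.toSignedMeasure).toJordanDecomposition.negPart

namespace MeasureTheory.Measure

variable {X : Type*} [MeasurableSpace X]

lemma add_sub_eq_add_sub_rev (ν ν' : Measure X) [IsFiniteMeasure ν] [IsFiniteMeasure ν'] :
    ν + (ν' - ν) = ν' + (ν - ν') := by
  have h := sub_toSignedMeasure_eq_toSignedMeasure_sub (μ := ν) (ν := ν')
  rw [sub_eq_sub_iff_add_eq_add] at h
  rw [← toSignedMeasure_eq_toSignedMeasure_iff, toSignedMeasure_add, toSignedMeasure_add]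
  rw [add_comm ν'.toSignedMeasure, ← h, add_comm]

lemma le_add_sub (ν ν' : Measure X) [IsFiniteMeasure ν] [IsFiniteMeasure ν'] :
    ν ≤ ν' + (ν - ν') :=
  add_sub_eq_add_sub_rev ν ν' ▸ Measure.le_add_right le_rfl

lemma sub_apply_univ_comm (ν ν' : Measure X) [IsProbabilityMeasure ν] [IsProbabilityMeasure ν'] :
    (ν - ν') Set.univ = (ν' - ν) Set.univ := by
  have h := congrArg (· Set.univ) (add_sub_eq_add_sub_rev ν ν')
  simp only [add_apply, measure_univ] at h
  exact ((ENNReal.add_right_inj ENNReal.one_ne_top).mp h).symm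

lemma sub_apply_univ_le_of_forall_le {ν ν' : Measure X} [IsFiniteMeasure ν] [IsFiniteMeasure ν']
    {c : ℝ≥0∞} (h : ∀ A, MeasurableSet A → ν A ≤ ν' A + c) : (ν - ν') Set.univ ≤ c := by
  obtain ⟨s, hs⟩ := exists_isHahnDecomposition ν ν'
  have hsc := hs.measurableSet.compl
  calc (ν - ν') Set.univ = (ν - ν') sᶜ := by
        rw [← measure_add_measure_compl hs.measurableSet,
          sub_apply_eq_zero_of_isHahnDecomposition hs, zero_add]
    _ = ν sᶜ - ν' sᶜ := by
        rw [← restrict_apply_univ, restrict_sub_eq_restrict_sub_restrict hsc,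
          sub_apply MeasurableSet.univ hs.ge_on_compl, restrict_apply_univ, restrict_apply_univ]
    _ ≤ c := tsub_le_iff_left.mpr (h _ hsc)

lemma lintegral_le_lintegral_add_sub_apply_univ (ν ν' : Measure X) [IsFiniteMeasure ν]
    [IsFiniteMeasure ν'] {f : X → ℝ≥0∞} (hf : ∀ x, f x ≤ 1) :
    ∫⁻ x, f x ∂ν ≤ ∫⁻ x, f x ∂ν' + (ν - ν') Set.univ :=
  calc ∫⁻ x, f x ∂ν ≤ ∫⁻ x, f x ∂(ν' + (ν - ν')) := lintegral_mono' (le_add_sub ν ν') le_rfl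
    _ = ∫⁻ x, f x ∂ν' + ∫⁻ x, f x ∂(ν - ν') := lintegral_add_measure _ _ _
    _ ≤ ∫⁻ x, f x ∂ν' + ∫⁻ _, 1 ∂(ν - ν') := by gcongr with x; exact hf x
    _ = ∫⁻ x, f x ∂ν' + (ν - ν') Set.univ := by rw [lintegral_one]

lemma compProd_sub_compProd_apply_univ_le {Y : Type*} [MeasurableSpace Y]
    (μ μ' : Measure X) [IsProbabilityMeasure μ] [IsFiniteMeasure μ']
    (K K' : Kernel X Y) [IsFiniteKernel K] [IsMarkovKernel K'] :
    (μ ⊗ₘ K - μ' ⊗ₘ K') Set.univ ≤ (μ - μ') Set.univ + ⨆ x, (K x - K' x) Set.univ := by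
  set b := ⨆ x, (K x - K' x) Set.univ
  refine sub_apply_univ_le_of_forall_le fun A hA ↦ ?_
  have hK : ∀ x, K x (Prod.mk x ⁻¹' A) ≤ K' x (Prod.mk x ⁻¹' A) + b := fun x ↦
    calc K x (Prod.mk x ⁻¹' A) ≤ (K' x + (K x - K' x)) (Prod.mk x ⁻¹' A) := le_add_sub _ _ _
      _ ≤ K' x (Prod.mk x ⁻¹' A) + b := by
        rw [add_apply]
        gcongr
        exact (measure_mono (Set.subset_univ _)).trans (le_iSup (fun x ↦ (K x - K' x) Set.univ) x)
  calc (μ ⊗ₘ K) A = ∫⁻ x, K x (Prod.mk x ⁻¹' A) ∂μ := compProd_apply hA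
    _ ≤ ∫⁻ x, (K' x (Prod.mk x ⁻¹' A) + b) ∂μ := lintegral_mono hK
    _ = ∫⁻ x, K' x (Prod.mk x ⁻¹' A) ∂μ + b := by
        rw [lintegral_add_right _ measurable_const, lintegral_const, measure_univ, mul_one]
    _ ≤ ∫⁻ x, K' x (Prod.mk x ⁻¹' A) ∂μ' + (μ - μ') Set.univ + b := by
        gcongr
        exact lintegral_le_lintegral_add_sub_apply_univ μ μ' fun _ ↦ prob_le_one
    _ = (μ' ⊗ₘ K') A + ((μ - μ') Set.univ + b) := by rw [compProd_apply hA, add_assoc]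

end MeasureTheory.Measure

open Measure in
lemma tvDist_eq_two_mul_toReal_sub_apply_univ {X : Type*} [MeasurableSpace X] (ν ν' : Measure X)
    [IsProbabilityMeasure ν] [IsProbabilityMeasure ν'] :
    tvDist ν ν' = 2 * ((ν - ν') Set.univ).toReal := by
  rw [tvDist, SignedMeasure.totalVariation, toJordanDecomposition_toSignedMeasure_sub]
  change ((ν - ν') Set.univ + (ν' - ν) Set.univ).toReal = _
  rw [← sub_apply_univ_comm, ENNReal.toReal_add (by finiteness) (by finiteness)]
  ring

/-- Perturbation of a measure–kernel product in total variation: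
`‖μ ⊗ K − μ' ⊗ K'‖ ≤ ‖μ − μ'‖ + sup_x ‖K_x − K'_x‖`. -/
theorem stmt1 {X Y : Type*} [MeasurableSpace X] [MeasurableSpace Y]
    (μ μ' : Measure X) [IsProbabilityMeasure μ] [IsProbabilityMeasure μ']
    (K K' : Kernel X Y) [IsMarkovKernel K] [IsMarkovKernel K'] :
    tvDist (μ ⊗ₘ K) (μ' ⊗ₘ K') ≤ tvDist μ μ' + ⨆ x : X, tvDist (K x) (K' x) := by
  have hsup : (⨆ x, (K x - K' x) Set.univ) ≠ ⊤ :=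
    ne_top_of_le_ne_top ENNReal.one_ne_top <|
      iSup_le fun x ↦ (Measure.sub_le Set.univ).trans prob_le_one
  simp only [tvDist_eq_two_mul_toReal_sub_apply_univ]
  rw [← Real.mul_iSup_of_nonneg zero_le_two, ← mul_add,
    ← ENNReal.toReal_iSup fun x ↦ measure_ne_top _ _,
    ← ENNReal.toReal_add (measure_ne_top _ _) hsup]
  gcongr
  · exact ENNReal.add_ne_top.mpr ⟨measure_ne_top _ _, hsup⟩
  · exact Measure.compProd_sub_compProd_apply_univ_le μ μ' K K'
end

section
/- Let Z be a standard Borel space and ν, ν̃ probability measures on Z. The γ-coupling γ(ν, ν̃) is a maximal coupling: γ(ν, ν̃)(Δ_Z) = ‖ν ∧ ν̃‖, where Δ_Z = {(z,z) : z ∈ Z} is the diagonal. -/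
open MeasureTheory ProbabilityTheory
open scoped ENNReal

/-- The γ-coupling of two finite measures:
`γ(ν,ν') = (ψ)_*(ν ∧ ν') + 1_{[0,1)}(‖ν ∧ ν'‖) · ((ν-ν')⁺ ⊗ (ν-ν')⁻)/(1-‖ν ∧ ν'‖)`,
where `ψ z = (z, z)` is the diagonal map. -/
noncomputable def gammaCoupling {Z : Type*} [MeasurableSpace Z] (ν ν' : Measure Z)
    [IsFiniteMeasure ν] [IsFiniteMeasure ν'] : Measure (Z × Z) :=
  (measInf ν ν').map (fun z => (z, z)) +
    (if measInf ν ν' Set.univ < 1 then (1 - measInf ν ν' Set.univ)⁻¹ else 0) •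
      ((ν.toSignedMeasure - ν'.toSignedMeasure).toJordanDecomposition.posPart.prod
        (ν.toSignedMeasure - ν'.toSignedMeasure).toJordanDecomposition.negPart)

lemma prod_diag_zero {Z : Type*} [MeasurableSpace Z] [MeasurableSingletonClass Z]
    (μ ν : Measure Z) [SigmaFinite ν] (h : μ ⟂ₘ ν)
    (hdiag : MeasurableSet {p : Z × Z | p.1 = p.2}) :
    μ.prod ν {p : Z × Z | p.1 = p.2} = 0 := by
  obtain ⟨s, hs, hμs, hνs⟩ := h
  rw [Measure.prod_apply hdiag]
  have hpre : ∀ x : Z, Prod.mk x ⁻¹' {p : Z × Z | p.1 = p.2} = {x} := by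
    intro x; ext y; simp [eq_comm]
  have : ∀ᵐ x ∂μ, ν (Prod.mk x ⁻¹' {p : Z × Z | p.1 = p.2}) = 0 := by
    filter_upwards [measure_eq_zero_iff_ae_notMem.mp hμs] with x hx
    rw [hpre x]
    exact measure_mono_null (by simpa using hx) hνs
  exact lintegral_eq_zero_iff' (measurable_measure_prodMk_left hdiag).aemeasurable |>.mpr this

/-- The γ-coupling is a maximal coupling: it assigns the diagonal exactly the
mass `‖ν ∧ ν'‖`. -/
theorem stmt11 {Z : Type*} [MeasurableSpace Z] [StandardBorelSpace Z]
    (ν ν' : Measure Z) [IsProbabilityMeasure ν] [IsProbabilityMeasure ν'] :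
    gammaCoupling ν ν' {p : Z × Z | p.1 = p.2} = measInf ν ν' Set.univ := by
  have hdiag : MeasurableSet {p : Z × Z | p.1 = p.2} := by
    letI := upgradeStandardBorel Z
    exact isClosed_diagonal.measurableSet
  have hsing := (ν.toSignedMeasure - ν'.toSignedMeasure).toJordanDecomposition.mutuallySingular
  have hzero := prod_diag_zero _ _ hsing hdiag
  have hpre : (fun z : Z => (z, z)) ⁻¹' {p : Z × Z | p.1 = p.2} = Set.univ := by
    ext z; simp
  have hmeas : Measurable fun z : Z => (z, z) := measurable_id.prodMk measurable_id
  rw [gammaCoupling, Measure.add_apply, Measure.smul_apply, hzero,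
    Measure.map_apply hmeas hdiag, hpre]
  simp
end
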